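/- Let P = conv{(0,0), (2,0), (1,1), (0,1)} ⊂ ℝ² and let Q = P + I be its Minkowski sum with the segment I = conv{(0,0), (0,1)}, so Q = conv{(0,0), (2,0), (2,1), (1,2), (0,2)}. Then the convex hull of (P×{1}) ∪ (Q×{0}) in ℝ³ equals the Minkowski sum F + J, where F = {(x, y, s) ∈ ℝ³ : x ≥ 0, y ≥ 0, 0 ≤ s ≤ 1, x ≤ 1, x + y + s ≤ 2} is the FFLV polytope in type A₂ for the weight ρ and J is the segment conv{(0,0,0), (1,0,0)}. -/

import Mathlib

/-!
By the Cayley trick, the push-pull polytope `Δ(P, Q)` of convex sets `P, Q` is the union over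
`s ∈ [0, 1]` of the slices `(s • P + (1 - s) • Q) × {s}`; for `Q = P + I` convexity of `P`
turns the slice into `P + (1 - s) • I`. Both sides are then identified with the polytope
`0 ≤ x, 0 ≤ y, 0 ≤ s ≤ 1, x ≤ 2, y + s ≤ 2, x + y + s ≤ 3`: a point of it is brought into the
trapezoid by lowering it by `min (1 - s) y`, and into `F` by moving it left by
`max 0 (max (x - 1) (x + y + s - 2))`.
-/

open Pointwise Set

section PushPull

variable {𝕜 E : Type*} [Field 𝕜] [LinearOrder 𝕜] [IsStrictOrderedRing 𝕜] [AddCommGroup E]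
  [Module 𝕜 E] {P Q I : Set E}

theorem convexHull_prod_one_union_prod_zero (hP : Convex 𝕜 P) (hQ : Convex 𝕜 Q)
    (hP₀ : P.Nonempty) (hQ₀ : Q.Nonempty) :
    convexHull 𝕜 (P ×ˢ ({1} : Set 𝕜) ∪ Q ×ˢ ({0} : Set 𝕜)) =
      {z | z.2 ∈ Icc 0 1 ∧ z.1 ∈ z.2 • P + (1 - z.2) • Q} := by
  rw [(hP.prod (convex_singleton 1)).convexHull_union (hQ.prod (convex_singleton 0))
    (hP₀.prod (singleton_nonempty 1)) (hQ₀.prod (singleton_nonempty 0))]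
  ext ⟨x, s⟩
  simp only [mem_convexJoin, mem_ofPred_eq]
  constructor
  · rintro ⟨⟨p, _⟩, ⟨hp, rfl : _ = (1 : 𝕜)⟩, ⟨q, _⟩, ⟨hq, rfl : _ = (0 : 𝕜)⟩,
      a, b, ha, hb, hab, h⟩
    simp only [Prod.smul_mk, Prod.mk_add_mk, smul_eq_mul, mul_one, mul_zero, add_zero,
      Prod.mk.injEq] at h
    obtain ⟨rfl, rfl⟩ := h
    obtain rfl : b = 1 - a := eq_sub_of_add_eq' hab
    exact ⟨⟨ha, by linarith⟩, add_mem_add (smul_mem_smul_set hp) (smul_mem_smul_set hq)⟩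
  · rintro ⟨⟨hs₀, hs₁⟩, _, ⟨p, hp, rfl⟩, _, ⟨q, hq, rfl⟩, rfl⟩
    exact ⟨(p, 1), ⟨hp, rfl⟩, (q, 0), ⟨hq, rfl⟩, s, 1 - s, hs₀, sub_nonneg.2 hs₁,
      add_sub_cancel s 1, by simp⟩

theorem convexHull_prod_one_union_add_prod_zero (hP : Convex 𝕜 P) (hI : Convex 𝕜 I)
    (hP₀ : P.Nonempty) (hI₀ : I.Nonempty) :
    convexHull 𝕜 (P ×ˢ ({1} : Set 𝕜) ∪ (P + I) ×ˢ ({0} : Set 𝕜)) =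
      {z | z.2 ∈ Icc 0 1 ∧ z.1 ∈ P + (1 - z.2) • I} := by
  rw [convexHull_prod_one_union_prod_zero hP (hP.add hI) hP₀ (hP₀.add hI₀)]
  ext ⟨x, s⟩
  refine and_congr_right fun hs => ?_
  rw [smul_add, ← add_assoc, ← hP.add_smul hs.1 (sub_nonneg.2 hs.2), add_sub_cancel, one_smul]

theorem smul_convexHull_zero_pair {c : 𝕜} (hc : 0 ≤ c) (v : E) :
    c • convexHull 𝕜 {0, v} = (· • v) '' Icc 0 c := by
  have hIcc : Icc 0 c = (c * ·) '' Icc 0 1 := by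
    rw [image_mul_left_Icc hc zero_le_one, mul_zero, mul_one]
  rw [hIcc, image_image, convexHull_pair, segment_eq_image, ← image_smul, image_image]
  simp [smul_smul]

theorem mem_add_smul_convexHull_zero_pair_iff {A : Set E} {c : 𝕜} (hc : 0 ≤ c) {v x : E} :
    x ∈ A + c • convexHull 𝕜 {0, v} ↔ ∃ r ∈ Icc 0 c, x - r • v ∈ A := by
  rw [smul_convexHull_zero_pair hc]
  constructor
  · rintro ⟨a, ha, _, ⟨r, hr, rfl⟩, rfl⟩
    exact ⟨r, hr, by rwa [add_sub_cancel_right]⟩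
  · rintro ⟨r, hr, h⟩
    exact ⟨_, h, r • v, ⟨r, hr, rfl⟩, sub_add_cancel x _⟩

end PushPull

theorem convexHull_trapezoid :
    convexHull ℝ ({((0 : ℝ), (0 : ℝ)), (2, 0), (1, 1), (0, 1)} : Set (ℝ × ℝ)) =
      {q | 0 ≤ q.1 ∧ 0 ≤ q.2 ∧ q.2 ≤ 1 ∧ q.1 + q.2 ≤ 2} := by
  refine (convexHull_min ?_ ?_).antisymm ?_
  · norm_num [insert_subset_iff]
  · rintro p ⟨hp₁, hp₂, hp₃, hp₄⟩ q ⟨hq₁, hq₂, hq₃, hq₄⟩ a b ha hb hab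
    simp only [mem_ofPred_eq, Prod.fst_add, Prod.snd_add, Prod.smul_fst, Prod.smul_snd,
      smul_eq_mul]
    refine ⟨by positivity, by positivity, by nlinarith, by nlinarith⟩
  · rintro ⟨u, v⟩ ⟨hu, hv, hv₁, huv⟩
    have hv₂ : 0 < 2 - v := by linarith
    rw [pair_comm (1, 1), insert_comm (2, 0), ← convexJoin_segments]
    refine mem_convexJoin.2 ⟨(0, v), ⟨1 - v, v, by linarith, hv, by ring, by simp⟩,
      (2 - v, v), ⟨1 - v, v, by linarith, hv, by ring, ?_⟩,
      (2 - v - u) / (2 - v), u / (2 - v), by bound, by positivity, by field_simp; ring, ?_⟩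
    · simp only [Prod.smul_mk, Prod.mk_add_mk, smul_eq_mul, Prod.mk.injEq]
      constructor <;> ring
    · simp only [Prod.smul_mk, Prod.mk_add_mk, smul_eq_mul, Prod.mk.injEq]
      constructor <;> field_simp <;> ring

def pushPullTrapezoid : Set ((ℝ × ℝ) × ℝ) :=
  {p | 0 ≤ p.1.1 ∧ 0 ≤ p.1.2 ∧ 0 ≤ p.2 ∧ p.2 ≤ 1 ∧ p.1.1 ≤ 2 ∧ p.1.2 + p.2 ≤ 2 ∧
    p.1.1 + p.1.2 + p.2 ≤ 3}

theorem convexHull_trapezoid_pushPull :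
    convexHull ℝ
        (((convexHull ℝ ({((0 : ℝ), (0 : ℝ)), (2, 0), (1, 1), (0, 1)} : Set (ℝ × ℝ))) ×ˢ
            ({1} : Set ℝ)) ∪
          ((convexHull ℝ ({((0 : ℝ), (0 : ℝ)), (2, 0), (1, 1), (0, 1)} : Set (ℝ × ℝ)) +
              convexHull ℝ ({((0 : ℝ), (0 : ℝ)), (0, 1)} : Set (ℝ × ℝ))) ×ˢ
            ({0} : Set ℝ))) = pushPullTrapezoid := by
  rw [convexHull_prod_one_union_add_prod_zero (convex_convexHull ℝ _) (convex_convexHull ℝ _)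
    (insert_nonempty _ _).convexHull (insert_nonempty _ _).convexHull, convexHull_trapezoid]
  ext ⟨⟨x, y⟩, s⟩
  simp only [pushPullTrapezoid, mem_ofPred_eq, mem_Icc]
  refine ⟨fun ⟨hs, h⟩ => ?_, fun h => ⟨⟨h.2.2.1, h.2.2.2.1⟩, ?_⟩⟩
  · obtain ⟨r, hr, h⟩ := (mem_add_smul_convexHull_zero_pair_iff (sub_nonneg.2 hs.2)).1 h
    simp only [mem_Icc, mem_ofPred_eq, Prod.smul_mk, Prod.mk_sub_mk, smul_eq_mul] at hr h
    grind
  · refine (mem_add_smul_convexHull_zero_pair_iff (sub_nonneg.2 h.2.2.2.1)).2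
      ⟨min (1 - s) y, ⟨?_, min_le_left _ _⟩, ?_⟩
    · grind
    · simp only [mem_ofPred_eq, Prod.smul_mk, Prod.mk_sub_mk, smul_eq_mul]
      grind

theorem FFLV_add_segment_eq :
    {p : (ℝ × ℝ) × ℝ | 0 ≤ p.1.1 ∧ 0 ≤ p.1.2 ∧ 0 ≤ p.2 ∧ p.2 ≤ 1 ∧ p.1.1 ≤ 1 ∧
          p.1.1 + p.1.2 + p.2 ≤ 2} +
        convexHull ℝ ({(((0 : ℝ), (0 : ℝ)), (0 : ℝ)), ((1, 0), 0)} : Set ((ℝ × ℝ) × ℝ)) =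
      pushPullTrapezoid := by
  ext ⟨⟨x, y⟩, s⟩
  rw [show (((0 : ℝ), (0 : ℝ)), (0 : ℝ)) = 0 from rfl, ← one_smul ℝ (convexHull ℝ _),
    mem_add_smul_convexHull_zero_pair_iff zero_le_one]
  simp only [pushPullTrapezoid, mem_ofPred_eq, mem_Icc, Prod.smul_mk, Prod.mk_sub_mk,
    smul_eq_mul]
  refine ⟨fun _ => by grind, fun h => ⟨max 0 (max (x - 1) (x + y + s - 2)), ?_⟩⟩
  grind

theorem pushPull_trapezoid_eq_FFLV_add_segment :
    convexHull ℝ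
        (((convexHull ℝ ({((0 : ℝ), (0 : ℝ)), (2, 0), (1, 1), (0, 1)} : Set (ℝ × ℝ))) ×ˢ
            ({1} : Set ℝ)) ∪
          ((convexHull ℝ ({((0 : ℝ), (0 : ℝ)), (2, 0), (1, 1), (0, 1)} : Set (ℝ × ℝ)) +
              convexHull ℝ ({((0 : ℝ), (0 : ℝ)), (0, 1)} : Set (ℝ × ℝ))) ×ˢ
            ({0} : Set ℝ))) =
      {p : (ℝ × ℝ) × ℝ | 0 ≤ p.1.1 ∧ 0 ≤ p.1.2 ∧ 0 ≤ p.2 ∧ p.2 ≤ 1 ∧ p.1.1 ≤ 1 ∧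
          p.1.1 + p.1.2 + p.2 ≤ 2} +
        convexHull ℝ ({(((0 : ℝ), (0 : ℝ)), (0 : ℝ)), ((1, 0), 0)} : Set ((ℝ × ℝ) × ℝ)) :=
  convexHull_trapezoid_pushPull.trans FFLV_add_segment_eq.symm
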